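/- For every x₀ ∈ ℝ^d, every r ∈ (0,1), every a > 1, and every Borel set A ⊂ B_{φ_a(r)}(x₀) ∖ B_r(x₀) with μ_{x₀,r}(A) ≥ (1/2) μ_{x₀,r}( B_{φ_a(r)}(x₀) ∖ B_r(x₀) ), one has ∫_A ℓ(|z−x₀|) |z−x₀|^{−d} dz ≥ (σ_{d-1}/2) · L(r) · (ln a)/a, where σ_{d-1} = 2π^{d/2}/Γ(d/2) is the surface measure of the unit sphere in ℝ^d. -/

import Mathlib

/-!
In polar coordinates about `x₀`, the `μ_{x₀,r}`-mass of the annulus `B_ρ(x₀) ∖ B_r(x₀)` is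
`σ_{d-1} ∫_r^ρ ℓ(s) / (s L(s)) ds = σ_{d-1} (log L(r) - log L(ρ))`, by the fundamental theorem of
calculus for the absolutely continuous function `log ∘ L`; for `ρ = φ_a(r)` this is `σ_{d-1} log a`.
On the annulus `L(|z - x₀|) ≥ L(ρ) = L(r) / a`, so `ℓ(|z - x₀|) |z - x₀|^{-d}` dominates `L(r) / a`
times the density of `μ_{x₀,r}`; integrating over `A` and using
`μ_{x₀,r}(A) ≥ μ_{x₀,r}(B_ρ(x₀) ∖ B_r(x₀)) / 2` gives the bound.
-/

open MeasureTheory Metric Set Filter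
open scoped Topology

noncomputable section

/-- `L(r) = ∫_r^1 ℓ(s)/s ds`. -/
def Lfun (ℓ : ℝ → ℝ) (r : ℝ) : ℝ := ∫ s in r..1, ℓ s / s

/-- `ℓ` is bounded away from `0` and `∞` on compact subsets of `(0,1)`. -/
def LocBddAway (ℓ : ℝ → ℝ) : Prop :=
  ∀ a b : ℝ, 0 < a → a ≤ b → b < 1 →
    ∃ m M : ℝ, 0 < m ∧ ∀ s : ℝ, a ≤ s → s ≤ b → m ≤ ℓ s ∧ ℓ s ≤ M

/-- the measure `μ_{x₀,r}`, with density
`x ↦ ℓ(|x-x₀|) L(|x-x₀|)⁻¹ |x-x₀|^{-d} 𝟙_{r ≤ |x-x₀| < 1}` w.r.t. Lebesgue measure,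
evaluated on a set `A`. -/
def muMeas (d : ℕ) (ℓ : ℝ → ℝ) (x₀ : EuclideanSpace ℝ (Fin d)) (r : ℝ)
    (A : Set (EuclideanSpace ℝ (Fin d))) : ℝ :=
  ∫ x in A ∩ {x | r ≤ ‖x - x₀‖ ∧ ‖x - x₀‖ < 1},
    ℓ ‖x - x₀‖ / (Lfun ℓ ‖x - x₀‖ * ‖x - x₀‖ ^ d)

/-- the surface measure `σ_{d-1} = 2 π^{d/2} / Γ(d/2)` of the unit sphere in `ℝ^d`. -/
def sphereSurf (d : ℕ) : ℝ := 2 * Real.pi ^ ((d : ℝ) / 2) / Real.Gamma ((d : ℝ) / 2)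

theorem LipschitzOnWith.comp_absolutelyContinuousOnInterval {X Y : Type*} [PseudoMetricSpace X]
    [PseudoMetricSpace Y] {g : X → Y} {f : ℝ → X} {K : NNReal} {s : Set X} {a b : ℝ}
    (hg : LipschitzOnWith K g s) (hf : AbsolutelyContinuousOnInterval f a b)
    (hfs : MapsTo f (uIcc a b) s) :
    AbsolutelyContinuousOnInterval (g ∘ f) a b := by
  unfold AbsolutelyContinuousOnInterval at hf ⊢
  refine squeeze_zero' (.of_forall fun _ => Finset.sum_nonneg fun _ _ => dist_nonneg) ?_
    (by simpa using hf.const_mul (K : ℝ))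
  filter_upwards [mem_inf_of_right (mem_principal_self _)] with E hE
  rw [Finset.mul_sum]
  refine Finset.sum_le_sum fun i hi => ?_
  exact hg.dist_le_mul _ (hfs (hE.1 i hi).1) _ (hfs (hE.1 i hi).2)

theorem AbsolutelyContinuousOnInterval.integral_deriv_div_eq_log_sub {f : ℝ → ℝ} {a b : ℝ}
    (hf : AbsolutelyContinuousOnInterval f a b) (hpos : ∀ x ∈ uIcc a b, 0 < f x) :
    ∫ x in a..b, deriv f x / f x = Real.log (f b) - Real.log (f a) := by
  have hlip : LocallyLipschitzOn (Ioi 0) Real.log :=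
    (Real.contDiffOn_log.mono fun _ hx => ne_of_gt hx).locallyLipschitzOn (convex_Ioi 0)
  obtain ⟨K, hK⟩ := (hlip.mono (image_subset_iff.2 hpos)).exists_lipschitzOnWith_of_compact
    (isCompact_uIcc.image_of_continuousOn hf.continuousOn)
  refine .trans ?_
    (hK.comp_absolutelyContinuousOnInterval hf (mapsTo_image _ _)).integral_deriv_eq_sub
  refine intervalIntegral.integral_congr_ae ?_
  filter_upwards [hf.ae_differentiableAt] with x hdiff hx
  have hxI := uIoc_subset_uIcc hx
  exact (deriv.log (hdiff hxI) (hpos x hxI).ne').symm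

theorem ball_diff_ball_eq_preimage_norm_sub {E : Type*} [SeminormedAddCommGroup E] (x₀ : E)
    (r ρ : ℝ) : ball x₀ ρ \ ball x₀ r = (fun x => ‖x - x₀‖) ⁻¹' Ico r ρ := by
  ext x
  simp only [Set.mem_sdiff, mem_ball, dist_eq_norm, mem_preimage, mem_Ico, not_lt]
  exact and_comm

theorem indicator_ball_diff_ball_fun_norm_sub {E : Type*} [SeminormedAddCommGroup E] (x₀ : E)
    (F : ℝ → ℝ) (r ρ : ℝ) :
    (ball x₀ ρ \ ball x₀ r).indicator (fun x => F ‖x - x₀‖) =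
      fun x => (Ico r ρ).indicator F ‖x - x₀‖ := by
  rw [ball_diff_ball_eq_preimage_norm_sub]
  exact funext fun x => indicator_comp_right (g := F) (fun x => ‖x - x₀‖)

theorem smul_indicator_Ico_eq_indicator_mul (n : ℕ) (F : ℝ → ℝ) (r ρ : ℝ) :
    (fun y : ℝ => y ^ n • (Ico r ρ).indicator F y) =
      (Ico r ρ).indicator fun y => y ^ n * F y := by
  ext y
  rw [smul_eq_mul, indicator_mul_right]

section Polar

variable {E : Type*} [NormedAddCommGroup E] [NormedSpace ℝ E] [FiniteDimensional ℝ E]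
  [Nontrivial E] [MeasurableSpace E] [BorelSpace E] (μ : Measure E) [μ.IsAddHaarMeasure]

theorem integrableOn_ball_diff_ball_fun_norm_sub (x₀ : E) {F : ℝ → ℝ} {r ρ : ℝ} (hrρ : r ≤ ρ)
    (hF : IntervalIntegrable (fun s => s ^ (Module.finrank ℝ E - 1) * F s) volume r ρ) :
    IntegrableOn (fun x => F ‖x - x₀‖) (ball x₀ ρ \ ball x₀ r) μ := by
  rw [← integrable_indicator_iff (measurableSet_ball.diff measurableSet_ball),
    indicator_ball_diff_ball_fun_norm_sub]
  refine ((integrable_fun_norm_addHaar μ (f := (Ico r ρ).indicator F)).2 ?_).comp_sub_right x₀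
  rw [smul_indicator_Ico_eq_indicator_mul]
  exact ((integrable_indicator_iff measurableSet_Ico).2
    ((intervalIntegrable_iff_integrableOn_Ico_of_le hrρ).1 hF)).integrableOn

theorem integral_ball_diff_ball_fun_norm_sub (x₀ : E) (F : ℝ → ℝ) {r ρ : ℝ} (hr : 0 < r)
    (hrρ : r ≤ ρ) :
    ∫ x in ball x₀ ρ \ ball x₀ r, F ‖x - x₀‖ ∂μ = Module.finrank ℝ E * μ.real (ball 0 1) *
      ∫ s in r..ρ, s ^ (Module.finrank ℝ E - 1) * F s := by
  rw [← integral_indicator (measurableSet_ball.diff measurableSet_ball),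
    indicator_ball_diff_ball_fun_norm_sub,
    integral_sub_right_eq_self (fun x => (Ico r ρ).indicator F ‖x‖) x₀,
    integral_fun_norm_addHaar, smul_indicator_Ico_eq_indicator_mul,
    setIntegral_indicator measurableSet_Ico,
    inter_eq_right.2 fun y (hy : y ∈ Ico r ρ) => mem_Ioi.2 (hr.trans_le hy.1),
    integral_Ico_eq_integral_Ioc, ← intervalIntegral.integral_of_le hrρ, nsmul_eq_mul,
    smul_eq_mul, mul_assoc]

end Polar

theorem natCast_mul_volume_real_unitBall_eq_sphereSurf {d : ℕ} (hd : 1 ≤ d) :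
    d * volume.real (ball (0 : EuclideanSpace ℝ (Fin d)) 1) = sphereSurf d := by
  have : Nonempty (Fin d) := ⟨⟨0, hd⟩⟩
  have hd0 : (0 : ℝ) < d := by exact_mod_cast hd
  have hΓ : Real.Gamma (d / 2 + 1) = d / 2 * Real.Gamma (d / 2) :=
    Real.Gamma_add_one (by positivity)
  have hsqrt : Real.sqrt Real.pi ^ d = Real.pi ^ ((d : ℝ) / 2) := by
    rw [Real.sqrt_eq_rpow, ← Real.rpow_natCast, ← Real.rpow_mul Real.pi_pos.le]
    ring_nf
  rw [measureReal_def, EuclideanSpace.volume_ball, Fintype.card_fin, ENNReal.ofReal_one, one_pow,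
    one_mul, ENNReal.toReal_ofReal (by positivity), hsqrt, hΓ, sphereSurf]
  have := (Real.Gamma_pos_of_pos (half_pos hd0)).ne'
  field_simp

theorem pow_sub_one_mul_div_pow {s : ℝ} (hs : s ≠ 0) {d : ℕ} (hd : 1 ≤ d) (c : ℝ) :
    s ^ (d - 1) * (c / s ^ d) = c / s := by
  rw [← pow_sub_one_mul (by omega : d ≠ 0) s]
  field_simp

section Lfun

variable {ℓ : ℝ → ℝ}

theorem intervalIntegrable_div_of_mem_Ioo
    (hLfin : ∀ r ∈ Set.Ioo (0:ℝ) 1, IntervalIntegrable (fun s => ℓ s / s) volume r 1)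
    {u v : ℝ} (hu : u ∈ Ioo (0:ℝ) 1) (hv : v ∈ Ioo (0:ℝ) 1) :
    IntervalIntegrable (fun s => ℓ s / s) volume u v :=
  (hLfin u hu).trans (hLfin v hv).symm

theorem Lfun_eq_sub_integral
    (hLfin : ∀ r ∈ Set.Ioo (0:ℝ) 1, IntervalIntegrable (fun s => ℓ s / s) volume r 1)
    {u v : ℝ} (hu : u ∈ Ioo (0:ℝ) 1) (hv : v ∈ Ioo (0:ℝ) 1) :
    Lfun ℓ v = Lfun ℓ u - ∫ s in u..v, ℓ s / s := by
  rw [Lfun, Lfun, ← intervalIntegral.integral_add_adjacent_intervals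
    (intervalIntegrable_div_of_mem_Ioo hLfin hu hv) (hLfin v hv)]
  ring

theorem continuousOn_Lfun
    (hLfin : ∀ r ∈ Set.Ioo (0:ℝ) 1, IntervalIntegrable (fun s => ℓ s / s) volume r 1)
    {u v : ℝ} (hu : u ∈ Ioo (0:ℝ) 1) (hv : v ∈ Ioo (0:ℝ) 1) :
    ContinuousOn (Lfun ℓ) (uIcc u v) :=
  (continuousOn_const.sub (intervalIntegral.continuousOn_primitive_interval'
    (intervalIntegrable_div_of_mem_Ioo hLfin hu hv) left_mem_uIcc)).congr fun _ hx =>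
      Lfun_eq_sub_integral hLfin hu (ordConnected_Ioo.uIcc_subset hu hv hx)

theorem Lfun_pos (hℓpos : ∀ s : ℝ, 0 < s → s < 1 → 0 < ℓ s)
    (hLfin : ∀ r ∈ Set.Ioo (0:ℝ) 1, IntervalIntegrable (fun s => ℓ s / s) volume r 1)
    {u : ℝ} (hu : u ∈ Ioo (0:ℝ) 1) : 0 < Lfun ℓ u :=
  intervalIntegral.intervalIntegral_pos_of_pos_on (hLfin u hu)
    (fun s hs => div_pos (hℓpos s (hu.1.trans hs.1) hs.2) (hu.1.trans hs.1)) hu.2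

theorem antitoneOn_Lfun (hℓpos : ∀ s : ℝ, 0 < s → s < 1 → 0 < ℓ s)
    (hLfin : ∀ r ∈ Set.Ioo (0:ℝ) 1, IntervalIntegrable (fun s => ℓ s / s) volume r 1) :
    AntitoneOn (Lfun ℓ) (Ioo 0 1) := by
  intro u hu v hv huv
  rw [Lfun_eq_sub_integral hLfin hu hv, sub_le_self_iff]
  refine intervalIntegral.integral_nonneg huv fun s hs => ?_
  have hs0 : 0 < s := hu.1.trans_le hs.1
  exact (div_pos (hℓpos s hs0 (hs.2.trans_lt hv.2)) hs0).le

theorem integral_div_Lfun_eq_log_sub (hℓpos : ∀ s : ℝ, 0 < s → s < 1 → 0 < ℓ s)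
    (hLfin : ∀ r ∈ Set.Ioo (0:ℝ) 1, IntervalIntegrable (fun s => ℓ s / s) volume r 1)
    {u v : ℝ} (hu : u ∈ Ioo (0:ℝ) 1) (hv : v ∈ Ioo (0:ℝ) 1) :
    ∫ s in u..v, ℓ s / s / Lfun ℓ s = Real.log (Lfun ℓ u) - Real.log (Lfun ℓ v) := by
  have hint := intervalIntegrable_div_of_mem_Ioo hLfin hu hv
  have hsub : uIcc u v ⊆ Ioo 0 1 := ordConnected_Ioo.uIcc_subset hu hv
  set M : ℝ → ℝ := fun x => Lfun ℓ u - ∫ s in u..x, ℓ s / s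
  have hML : ∀ x ∈ uIcc u v, M x = Lfun ℓ x := fun x hx =>
    (Lfun_eq_sub_integral hLfin hu (hsub hx)).symm
  have hM : AbsolutelyContinuousOnInterval M u v :=
    (LipschitzWith.const (Lfun ℓ u)).lipschitzOnWith.absolutelyContinuousOnInterval.sub
      (hint.absolutelyContinuousOnInterval_intervalIntegral left_mem_uIcc)
  have hlog := hM.integral_deriv_div_eq_log_sub fun x hx =>
    hML x hx ▸ Lfun_pos hℓpos hLfin (hsub hx)
  rw [hML u left_mem_uIcc, hML v right_mem_uIcc] at hlog
  rw [← neg_sub, ← hlog, ← intervalIntegral.integral_neg]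
  refine intervalIntegral.integral_congr_ae ?_
  filter_upwards [hint.ae_hasDerivAt_integral] with x hderiv hx
  have hxI := uIoc_subset_uIcc hx
  rw [((hderiv hxI u left_mem_uIcc).const_sub (Lfun ℓ u)).deriv, hML x hxI, neg_div, neg_neg]

end Lfun

theorem pow_sub_one_mul_div_mul_pow {s : ℝ} (hs : s ≠ 0) {d : ℕ} (hd : 1 ≤ d) (c b : ℝ) :
    s ^ (d - 1) * (c / (b * s ^ d)) = c / s / b := by
  rw [div_mul_eq_div_div, pow_sub_one_mul_div_pow hs hd, div_right_comm]

section muMeas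

variable {d : ℕ} {ℓ : ℝ → ℝ} {x₀ : EuclideanSpace ℝ (Fin d)} {r ρ : ℝ}

theorem muMeas_eq_setIntegral_of_subset {A : Set (EuclideanSpace ℝ (Fin d))}
    (hA : A ⊆ ball x₀ ρ \ ball x₀ r) (hρ : ρ ≤ 1) :
    muMeas d ℓ x₀ r A = ∫ x in A, ℓ ‖x - x₀‖ / (Lfun ℓ ‖x - x₀‖ * ‖x - x₀‖ ^ d) := by
  rw [muMeas, inter_eq_left.2]
  intro x hx
  rw [ball_diff_ball_eq_preimage_norm_sub] at hA
  exact ⟨(hA hx).1, (hA hx).2.trans_le hρ⟩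

theorem muMeas_ball_diff_ball (hd : 1 ≤ d) (hℓpos : ∀ s : ℝ, 0 < s → s < 1 → 0 < ℓ s)
    (hLfin : ∀ r ∈ Set.Ioo (0:ℝ) 1, IntervalIntegrable (fun s => ℓ s / s) volume r 1)
    (hr : r ∈ Ioo (0:ℝ) 1) (hρ : ρ ∈ Ioo (0:ℝ) 1) (hrρ : r ≤ ρ) :
    muMeas d ℓ x₀ r (ball x₀ ρ \ ball x₀ r) =
      sphereSurf d * (Real.log (Lfun ℓ r) - Real.log (Lfun ℓ ρ)) := by
  have : Nonempty (Fin d) := ⟨⟨0, hd⟩⟩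
  rw [muMeas_eq_setIntegral_of_subset subset_rfl hρ.2.le,
    integral_ball_diff_ball_fun_norm_sub volume x₀ (fun s => ℓ s / (Lfun ℓ s * s ^ d)) hr.1 hrρ,
    finrank_euclideanSpace_fin, natCast_mul_volume_real_unitBall_eq_sphereSurf hd,
    ← integral_div_Lfun_eq_log_sub hℓpos hLfin hr hρ]
  congr 1
  refine intervalIntegral.integral_congr fun s hs => ?_
  rw [uIcc_of_le hrρ] at hs
  exact pow_sub_one_mul_div_mul_pow (hr.1.trans_le hs.1).ne' hd _ _

theorem Lfun_mul_muMeas_le_setIntegral (hd : 1 ≤ d) (hℓpos : ∀ s : ℝ, 0 < s → s < 1 → 0 < ℓ s)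
    (hLfin : ∀ r ∈ Set.Ioo (0:ℝ) 1, IntervalIntegrable (fun s => ℓ s / s) volume r 1)
    (hr : r ∈ Ioo (0:ℝ) 1) (hρ : ρ ∈ Ioo (0:ℝ) 1) (hrρ : r ≤ ρ)
    {A : Set (EuclideanSpace ℝ (Fin d))} (hAm : MeasurableSet A)
    (hA : A ⊆ ball x₀ ρ \ ball x₀ r) :
    Lfun ℓ ρ * muMeas d ℓ x₀ r A ≤ ∫ z in A, ℓ ‖z - x₀‖ / ‖z - x₀‖ ^ d := by
  have : Nonempty (Fin d) := ⟨⟨0, hd⟩⟩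
  have hint := intervalIntegrable_div_of_mem_Ioo hLfin hr hρ
  have hpos : ∀ s ∈ uIoc r ρ, 0 < s := fun s hs => by
    rw [uIoc_of_le hrρ] at hs
    exact hr.1.trans hs.1
  have hradial : IntegrableOn (fun z => ℓ ‖z - x₀‖ / ‖z - x₀‖ ^ d) A := by
    refine (integrableOn_ball_diff_ball_fun_norm_sub volume x₀ (F := fun s => ℓ s / s ^ d) hrρ
      ?_).mono_set hA
    rw [finrank_euclideanSpace_fin]
    exact hint.congr fun s hs => (pow_sub_one_mul_div_pow (hpos s hs).ne' hd _).symm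
  have hdensity : IntegrableOn
      (fun z => ℓ ‖z - x₀‖ / (Lfun ℓ ‖z - x₀‖ * ‖z - x₀‖ ^ d)) A := by
    refine (integrableOn_ball_diff_ball_fun_norm_sub volume x₀
      (F := fun s => ℓ s / (Lfun ℓ s * s ^ d)) hrρ ?_).mono_set hA
    rw [finrank_euclideanSpace_fin]
    refine (hint.mul_continuousOn ((continuousOn_Lfun hLfin hr hρ).inv₀ fun s hs =>
      (Lfun_pos hℓpos hLfin (ordConnected_Ioo.uIcc_subset hr hρ hs)).ne')).congr fun s hs => ?_
    exact (pow_sub_one_mul_div_mul_pow (hpos s hs).ne' hd _ _).symm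
  rw [muMeas_eq_setIntegral_of_subset hA hρ.2.le, ← integral_const_mul]
  refine setIntegral_mono_on (hdensity.const_mul _) hradial hAm fun z hz => ?_
  rw [ball_diff_ball_eq_preimage_norm_sub] at hA
  obtain ⟨hrz, hzρ⟩ := hA hz
  set t := ‖z - x₀‖
  have ht : t ∈ Ioo (0:ℝ) 1 := ⟨hr.1.trans_le hrz, hzρ.trans hρ.2⟩
  have hLt := Lfun_pos hℓpos hLfin ht
  calc Lfun ℓ ρ * (ℓ t / (Lfun ℓ t * t ^ d)) = Lfun ℓ ρ / Lfun ℓ t * (ℓ t / t ^ d) := by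
        rw [mul_div_assoc', div_mul_div_comm]
    _ ≤ 1 * (ℓ t / t ^ d) := by
        have := (hℓpos t ht.1 ht.2).le
        gcongr
        exact div_le_one_of_le₀ (antitoneOn_Lfun hℓpos hLfin ht hρ hzρ.le) hLt.le
    _ = ℓ t / t ^ d := one_mul _

end muMeas

theorem statement13_general (d : ℕ) (hd : 1 ≤ d) (ℓ : ℝ → ℝ)
    (hℓpos : ∀ s : ℝ, 0 < s → s < 1 → 0 < ℓ s)
    (hLfin : ∀ r ∈ Set.Ioo (0:ℝ) 1, IntervalIntegrable (fun s => ℓ s / s) volume r 1)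
    (Linv : ℝ → ℝ)
    (hLinv₂ : ∀ y : ℝ, 0 < y → Linv y ∈ Set.Ioo (0:ℝ) 1 ∧ Lfun ℓ (Linv y) = y) :
    ∀ (x₀ : EuclideanSpace ℝ (Fin d)) (r a : ℝ), 0 < r → r < 1 → 1 < a →
      ∀ A : Set (EuclideanSpace ℝ (Fin d)), MeasurableSet A →
        A ⊆ Metric.ball x₀ (Linv (Lfun ℓ r / a)) \ Metric.ball x₀ r →
        muMeas d ℓ x₀ r A ≥
          (1 / 2) * muMeas d ℓ x₀ r
            (Metric.ball x₀ (Linv (Lfun ℓ r / a)) \ Metric.ball x₀ r) →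
        (∫ z in A, ℓ ‖z - x₀‖ / ‖z - x₀‖ ^ d)
          ≥ sphereSurf d / 2 * Lfun ℓ r * Real.log a / a := by
  intro x₀ r a hr hr1 ha A hAm hA hAmu
  have hr' : r ∈ Ioo (0:ℝ) 1 := ⟨hr, hr1⟩
  have hLr := Lfun_pos hℓpos hLfin hr'
  have ha0 : 0 < a := zero_lt_one.trans ha
  obtain ⟨hρ, hLρ⟩ := hLinv₂ _ (div_pos hLr ha0)
  set ρ := Linv (Lfun ℓ r / a)
  have hrρ : r ≤ ρ := by
    by_contra! hρr
    have := antitoneOn_Lfun hℓpos hLfin hρ hr' hρr.le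
    rw [hLρ] at this
    exact (div_lt_self hLr ha).not_ge this
  have hannulus := muMeas_ball_diff_ball (x₀ := x₀) hd hℓpos hLfin hr' hρ hrρ
  rw [hLρ, Real.log_div hLr.ne' ha0.ne', sub_sub_cancel] at hannulus
  calc sphereSurf d / 2 * Lfun ℓ r * Real.log a / a
      = Lfun ℓ ρ * (1 / 2 * muMeas d ℓ x₀ r (ball x₀ ρ \ ball x₀ r)) := by
        rw [hannulus, hLρ]; ring
    _ ≤ Lfun ℓ ρ * muMeas d ℓ x₀ r A := by gcongr; exact (Lfun_pos hℓpos hLfin hρ).le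
    _ ≤ ∫ z in A, ℓ ‖z - x₀‖ / ‖z - x₀‖ ^ d :=
        Lfun_mul_muMeas_le_setIntegral hd hℓpos hLfin hr' hρ hrρ hAm hA

/-- For every `x₀ ∈ ℝ^d`, every `r ∈ (0,1)`, every `a > 1` and every
Borel `A ⊂ B_{φ_a(r)}(x₀) ∖ B_r(x₀)` with
`μ_{x₀,r}(A) ≥ (1/2) μ_{x₀,r}(B_{φ_a(r)}(x₀) ∖ B_r(x₀))`, one has
`∫_A ℓ(|z-x₀|)|z-x₀|^{-d} dz ≥ (σ_{d-1}/2) L(r) (ln a)/a`, where `φ_a(r) = L⁻¹(L(r)/a)`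
and `σ_{d-1} = 2π^{d/2}/Γ(d/2)`. -/
theorem statement13 (d : ℕ) (hd : 1 ≤ d) (ℓ : ℝ → ℝ) (hℓmeas : Measurable ℓ)
    (hℓpos : ∀ s : ℝ, 0 < s → s < 1 → 0 < ℓ s) (hℓbdd : LocBddAway ℓ)
    (hLfin : ∀ r ∈ Set.Ioo (0:ℝ) 1, IntervalIntegrable (fun s => ℓ s / s) volume r 1)
    (hLdiv : Filter.Tendsto (fun r => Lfun ℓ r) (𝓝[>] (0 : ℝ)) Filter.atTop)
    (Linv : ℝ → ℝ)
    (hLinv₁ : ∀ r ∈ Set.Ioo (0:ℝ) 1, Linv (Lfun ℓ r) = r)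
    (hLinv₂ : ∀ y : ℝ, 0 < y → Linv y ∈ Set.Ioo (0:ℝ) 1 ∧ Lfun ℓ (Linv y) = y) :
    ∀ (x₀ : EuclideanSpace ℝ (Fin d)) (r a : ℝ), 0 < r → r < 1 → 1 < a →
      ∀ A : Set (EuclideanSpace ℝ (Fin d)), MeasurableSet A →
        A ⊆ Metric.ball x₀ (Linv (Lfun ℓ r / a)) \ Metric.ball x₀ r →
        muMeas d ℓ x₀ r A ≥
          (1 / 2) * muMeas d ℓ x₀ r
            (Metric.ball x₀ (Linv (Lfun ℓ r / a)) \ Metric.ball x₀ r) →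
        (∫ z in A, ℓ ‖z - x₀‖ / ‖z - x₀‖ ^ d)
          ≥ sphereSurf d / 2 * Lfun ℓ r * Real.log a / a :=
  statement13_general d hd ℓ hℓpos hLfin Linv hLinv₂
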